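/- For every n ≥ 2, every k ∈ {1,…,n}, and every polynomial f ∈ ℂ[z₁,…,zₙ] with ∂f/∂zₖ = 0, the shear field f ∂/∂zₖ belongs to the smallest Lie subalgebra of the derivations of ℂ[z₁,…,zₙ] containing U, V′ and V″. -/

import Mathlib

open MvPolynomial

/-- The polynomial vector field `f ∂/∂zₖ`: the derivation of `ℂ[z₁,…,zₙ]`
sending the coordinate `zₖ` to `f` and all other coordinates to `0`. -/
noncomputable def der (n : ℕ) (f : MvPolynomial (Fin n) ℂ) (k : Fin n) :
    Derivation ℂ (MvPolynomial (Fin n) ℂ) (MvPolynomial (Fin n) ℂ) :=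
  MvPolynomial.mkDerivation ℂ (Pi.single k f)

/-- `U = ∂/∂zₙ`  (coordinates are `0`-indexed: `zₖ = X ⟨k-1,_⟩`). -/
noncomputable def U (n : ℕ) :
    Derivation ℂ (MvPolynomial (Fin n) ℂ) (MvPolynomial (Fin n) ℂ) :=
  MvPolynomial.mkDerivation ℂ (fun i => if (i : ℕ) = n - 1 then 1 else 0)

/-- `V′ = ∂/∂zₙ + zₙ⁵ ∂/∂z_{n−1} + zₙ² z_{n−1}⁵ ∂/∂z_{n−2} + ⋯ + zₙ² z_{n−1}² ⋯ z₃² z₂⁵ ∂/∂z₁`,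
i.e. `V′(zₙ) = 1` and `V′(zₖ) = zₙ² z_{n−1}² ⋯ z_{k+2}² · z_{k+1}⁵` for `1 ≤ k ≤ n−1`. -/
noncomputable def V' (n : ℕ) :
    Derivation ℂ (MvPolynomial (Fin n) ℂ) (MvPolynomial (Fin n) ℂ) :=
  MvPolynomial.mkDerivation ℂ (fun i =>
    if h : (i : ℕ) + 1 < n then
      (∏ j ∈ Finset.univ.filter (fun j : Fin n => (i : ℕ) + 1 < (j : ℕ)), (X j) ^ 2) *
        (X (⟨(i : ℕ) + 1, h⟩ : Fin n)) ^ 5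
    else 1)

/-- `V″ = ∂/∂z₁ + z₁⁵ ∂/∂z₂ + z₁² z₂⁵ ∂/∂z₃ + ⋯ + z₁² z₂² ⋯ z_{n−2}² z_{n−1}⁵ ∂/∂zₙ`,
i.e. `V″(z₁) = 1` and `V″(zₖ) = z₁² z₂² ⋯ z_{k−2}² · z_{k−1}⁵` for `2 ≤ k ≤ n`. -/
noncomputable def V'' (n : ℕ) :
    Derivation ℂ (MvPolynomial (Fin n) ℂ) (MvPolynomial (Fin n) ℂ) :=
  MvPolynomial.mkDerivation ℂ (fun i =>
    if h : 0 < (i : ℕ) then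
      (∏ j ∈ Finset.univ.filter (fun j : Fin n => (j : ℕ) < (i : ℕ) - 1), (X j) ^ 2) *
        (X (⟨(i : ℕ) - 1, lt_of_le_of_lt (Nat.sub_le _ _) i.isLt⟩ : Fin n)) ^ 5
    else 1)

/-!
Write `g • ∂ₖ` for the field `g ∂/∂zₖ`; then `⁅f • ∂ₖ, g • ∂ₗ⁆ = (f ∂ₖg) • ∂ₗ - (g ∂ₗf) • ∂ₖ`, so
`ad ∂ⱼ` differentiates every coefficient of a field in `zⱼ`. Every coefficient of `V′` other than
the `k`-th has degree at most `2` in `z_{k+1}`, so `(ad ∂_{k+1})^{5-e} V′` is a nonzero multiple of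
`z_{k+2}² ⋯ zₙ² z_{k+1}^e ∂ₖ` (`e ≤ 2`), and the squares are stripped off by `ad ∂ⱼ`, `j > k + 1`.
Descending from `U = ∂ₙ` this gives every `∂ₖ`, and then (with `V″` for the other direction) the
fields `z_{k±1}^e ∂ₖ`, `e ≤ 2`. The double bracket `⁅zⱼ² ∂ₖ, ⁅zⱼ^a ∂ₖ, zₖ ∂ⱼ⁆⁆ = -(a + 2) zⱼ^{a+1} ∂ₖ`
raises these to all powers, `⁅g ∂ₗ, zₗ ∂ₖ⁆ = g ∂ₖ` (for `∂ₖ g = 0`) carries them to all `j ≠ k`, and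
`⁅m ∂ⱼ, zⱼ^{b+1} ∂ₖ⁆ = (b + 1) m zⱼ^b ∂ₖ` builds every monomial free of `zₖ`.
-/

section CommRing

variable {R σ : Type*} [CommRing R]

theorem lie_smul_pderiv_smul_pderiv (f g : MvPolynomial σ R) (k l : σ) :
    ⁅f • pderiv (R := R) k, g • pderiv l⁆ =
      (f * pderiv k g) • pderiv (R := R) l - (g * pderiv l f) • pderiv k := by
  classical
  refine derivation_ext fun i => ?_
  simp only [Derivation.commutator_apply, Derivation.sub_apply, Derivation.smul_apply,
    pderiv_X, smul_eq_mul, Pi.single_apply]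
  split_ifs <;> simp

theorem lie_pderiv_mkDerivation (j : σ) (w : σ → MvPolynomial σ R) :
    ⁅pderiv (R := R) j, mkDerivation R w⁆ = mkDerivation R (fun i => pderiv j (w i)) := by
  classical
  refine derivation_ext fun i => ?_
  simp [Derivation.commutator_apply, mkDerivation_X, pderiv_X, Pi.single_apply, apply_ite]

theorem pderiv_prod_X_pow_of_notMem {j : σ} {s : Finset σ} (a : σ → ℕ) (hj : j ∉ s) :
    pderiv j (∏ l ∈ s, X l ^ a l : MvPolynomial σ R) = 0 := by
  classical
  induction s using Finset.induction_on with
  | empty => simp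
  | insert l s hl ih =>
    rw [Finset.prod_insert hl, pderiv_mul, ih (by simp_all), pderiv_pow,
      pderiv_X_of_ne (by rintro rfl; simp at hj)]
    simp

theorem iterate_pderiv_mul_X_pow {j : σ} {Q : MvPolynomial σ R} (hQ : pderiv j Q = 0)
    (N m : ℕ) : (pderiv j)^[m] (Q * X j ^ N) = N.descFactorial m • (Q * X j ^ (N - m)) := by
  induction m with
  | zero => simp
  | succ m ih =>
    rw [Function.iterate_succ_apply', ih, Nat.descFactorial_succ]
    simp only [map_nsmul, pderiv_mul, hQ, pderiv_pow, pderiv_X_self, Nat.sub_sub]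
    simp only [nsmul_eq_mul, Nat.cast_mul]
    ring

theorem iterate_pderiv_mul_X_pow_of_lt {j : σ} {Q : MvPolynomial σ R} (hQ : pderiv j Q = 0)
    {N m : ℕ} (h : N < m) : (pderiv j)^[m] (Q * X j ^ N) = 0 := by
  rw [iterate_pderiv_mul_X_pow hQ, Nat.descFactorial_eq_zero_iff_lt.mpr h, zero_smul]

theorem iterate_pderiv_prod_X_pow_mul_X_pow {j p : σ} (s : Finset σ) {a b m : ℕ} (hp : p ≠ j)
    (ha : a < m) : (pderiv j)^[m] ((∏ l ∈ s, X l ^ a) * X p ^ b : MvPolynomial σ R) = 0 := by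
  classical
  have hQ (t : Finset σ) (ht : j ∉ t) :
      pderiv j ((∏ l ∈ t, X l ^ a) * X p ^ b : MvPolynomial σ R) = 0 := by
    simp [pderiv_prod_X_pow_of_notMem (fun _ => a) ht, pderiv_X_of_ne hp]
  by_cases hj : j ∈ s
  · have hsplit : (∏ l ∈ s, X l ^ a) * X p ^ b =
        ((∏ l ∈ s.erase j, X l ^ a) * X p ^ b : MvPolynomial σ R) * X j ^ a := by
      rw [← Finset.mul_prod_erase s _ hj]
      ring
    rw [hsplit, iterate_pderiv_mul_X_pow_of_lt (hQ _ (Finset.notMem_erase j s)) ha]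
  · simpa using iterate_pderiv_mul_X_pow_of_lt (hQ s hj) (N := 0) (m := m) (by omega)

theorem smul_pderiv_eq_mkDerivation [DecidableEq σ] (g : MvPolynomial σ R) (k : σ) :
    g • pderiv (R := R) k = mkDerivation R (Pi.single k g) := by
  refine derivation_ext fun i => ?_
  simp [pderiv_X, mkDerivation_X, Pi.single_apply]

variable {L : LieSubalgebra R (Derivation R (MvPolynomial σ R) (MvPolynomial σ R))}

theorem mkDerivation_iterate_pderiv_mem {j : σ} {w : σ → MvPolynomial σ R}
    (hj : pderiv j ∈ L) (hw : mkDerivation R w ∈ L) (m : ℕ) :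
    mkDerivation R (fun i => (pderiv j)^[m] (w i)) ∈ L := by
  induction m with
  | zero => exact hw
  | succ m ih =>
    simpa only [Function.iterate_succ_apply', lie_pderiv_mkDerivation] using L.lie_mem hj ih

theorem iterate_pderiv_smul_pderiv_mem {j k : σ} {g : MvPolynomial σ R}
    (hj : pderiv j ∈ L) (hg : g • pderiv k ∈ L) (m : ℕ) :
    (pderiv j)^[m] g • pderiv k ∈ L := by
  classical
  rw [smul_pderiv_eq_mkDerivation] at hg ⊢
  convert mkDerivation_iterate_pderiv_mem hj hg m using 2
  exact funext fun i =>
    (Pi.apply_single (fun _ => (pderiv j)^[m]) (fun _ => iterate_map_zero _ _) k g i).symm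

theorem mul_X_pow_smul_pderiv_mem {g : MvPolynomial σ R} {j k : σ} {b : ℕ}
    (hg : g • pderiv j ∈ L) (hX : (X j ^ (b + 1) : MvPolynomial σ R) • pderiv k ∈ L)
    (hgk : pderiv k g = 0) : (b + 1) • ((g * X j ^ b) • pderiv k) ∈ L := by
  convert L.lie_mem hg hX using 1
  rw [lie_smul_pderiv_smul_pderiv, ← smul_assoc]
  simp only [hgk, mul_zero, zero_smul, sub_zero, pderiv_pow, pderiv_X_self]
  congr 1
  simp only [nsmul_eq_mul, Nat.add_sub_cancel]
  push_cast
  ring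

end CommRing

section Field

variable {R σ : Type*} [Field R] [CharZero R]
  {L : LieSubalgebra R (Derivation R (MvPolynomial σ R) (MvPolynomial σ R))}

theorem LieSubalgebra.mem_of_nsmul_mem {A : Type*} [LieRing A] [LieAlgebra R A]
    {L : LieSubalgebra R A} {D : A} {m : ℕ} (hm : m ≠ 0) (h : m • D ∈ L) : D ∈ L := by
  rw [← Nat.cast_smul_eq_nsmul R] at h
  exact (L.toSubmodule.smul_mem_iff (Nat.cast_ne_zero.mpr hm)).mp h

theorem smul_pderiv_mem_of_mul_X_pow {j k : σ} {g : MvPolynomial σ R} {a : ℕ}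
    (hj : pderiv j ∈ L) (hg : pderiv j g = 0) (h : (g * X j ^ a) • pderiv k ∈ L) :
    g • pderiv k ∈ L := by
  have := iterate_pderiv_smul_pderiv_mem hj h a
  rw [iterate_pderiv_mul_X_pow hg, Nat.sub_self, pow_zero, mul_one, Nat.descFactorial_self,
    smul_assoc] at this
  exact L.mem_of_nsmul_mem a.factorial_ne_zero this

theorem smul_pderiv_mem_of_prod_X_pow_mul {k : σ} {g : MvPolynomial σ R} {s : Finset σ}
    (a : σ → ℕ) (hs : ∀ l ∈ s, pderiv l ∈ L ∧ pderiv l g = 0)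
    (h : ((∏ l ∈ s, X l ^ a l) * g) • pderiv k ∈ L) : g • pderiv k ∈ L := by
  classical
  induction s using Finset.induction_on with
  | empty => simpa using h
  | insert l s hl ih =>
    refine ih (fun i hi => hs i (Finset.mem_insert_of_mem hi)) ?_
    obtain ⟨hlL, hlg⟩ := hs l (Finset.mem_insert_self l s)
    refine smul_pderiv_mem_of_mul_X_pow (a := a l) hlL ?_ ?_
    · simp [pderiv_prod_X_pow_of_notMem a hl, hlg]
    · rwa [Finset.prod_insert hl, mul_assoc, mul_comm] at h

theorem mul_X_pow_smul_pderiv_mem_of_mkDerivation_mem {w : σ → MvPolynomial σ R} {j k : σ}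
    {P : MvPolynomial σ R} {N m : ℕ} (hw : mkDerivation R w ∈ L) (hj : pderiv j ∈ L)
    (hP : pderiv j P = 0) (hwk : w k = P * X j ^ N) (hwi : ∀ i ≠ k, (pderiv j)^[m] (w i) = 0)
    (hm : m ≤ N) : (P * X j ^ (N - m)) • pderiv k ∈ L := by
  have hiter : mkDerivation R (fun i => (pderiv j)^[m] (w i)) =
      N.descFactorial m • ((P * X j ^ (N - m)) • pderiv (R := R) k) := by
    refine derivation_ext fun i => ?_
    rcases eq_or_ne i k with rfl | hik
    · simp [mkDerivation_X, hwk, iterate_pderiv_mul_X_pow hP]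
    · simp [mkDerivation_X, hwi i hik, pderiv_X_of_ne hik]
  have := mkDerivation_iterate_pderiv_mem hj hw m
  rw [hiter] at this
  exact L.mem_of_nsmul_mem (by simp [Nat.descFactorial_eq_zero_iff_lt, hm]) this

theorem X_pow_smul_pderiv_mem_of_sq {j k : σ} (hjk : j ≠ k) (hk : pderiv k ∈ L)
    (h2 : (X j ^ 2 : MvPolynomial σ R) • pderiv k ∈ L)
    (h1 : (X k : MvPolynomial σ R) • pderiv j ∈ L) (a : ℕ) :
    (X j ^ a : MvPolynomial σ R) • pderiv k ∈ L := by
  classical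
  induction a with
  | zero => simpa using hk
  | succ a ih =>
    have hlie : ⁅(X j ^ 2 : MvPolynomial σ R) • pderiv (R := R) k,
        ⁅(X j ^ a : MvPolynomial σ R) • pderiv (R := R) k,
          (X k : MvPolynomial σ R) • pderiv j⁆⁆ =
          -((a + 2) • ((X j ^ (a + 1) : MvPolynomial σ R) • pderiv (R := R) k)) := by
      refine derivation_ext fun i => ?_
      rcases eq_or_ne i k with rfl | hik
      · cases a <;>
          simp [Derivation.commutator_apply, pderiv_X, hjk, hjk.symm] <;> ring
      · by_cases hij : i = j <;>
          simp [Derivation.commutator_apply, pderiv_X, hik, hij, hjk]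
    have h := L.lie_mem h2 (L.lie_mem ih h1)
    rw [hlie, neg_mem_iff] at h
    exact L.mem_of_nsmul_mem (by omega) h

theorem apply_eq_zero_of_mem_support_of_pderiv_eq_zero {f : MvPolynomial σ R} {k : σ}
    (hf : pderiv k f = 0) {α : σ →₀ ℕ} (hα : α ∈ f.support) : α k = 0 := by
  by_contra hk
  have h := coeff_pderiv (i := k) f (α - Finsupp.single k 1)
  rw [hf, coeff_zero, tsub_add_cancel_of_le (Finsupp.single_le_iff.mpr (by omega))] at h
  have hcast : ((α - Finsupp.single k 1 : σ →₀ ℕ) k : R) + 1 = α k := by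
    rw [Finsupp.tsub_apply, Finsupp.single_eq_same]
    exact_mod_cast Nat.sub_add_cancel (by omega)
  rw [hcast, eq_comm, mul_eq_zero] at h
  exact h.elim (mem_support_iff.mp hα) (Nat.cast_ne_zero.mpr hk)

theorem monomial_smul_pderiv_mem (hpderiv : ∀ k : σ, pderiv k ∈ L)
    (hX : ∀ j k : σ, j ≠ k → ∀ a : ℕ, (X j ^ a : MvPolynomial σ R) • pderiv k ∈ L)
    (α : σ →₀ ℕ) (k : σ) (hk : α k = 0) :
    monomial α (1 : R) • pderiv k ∈ L := by
  induction α using Finsupp.induction generalizing k with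
  | zero => simpa using hpderiv k
  | single_add j b β hj hb ih =>
    rw [Finsupp.add_apply] at hk
    have hjk : j ≠ k := by rintro rfl; simp [Finsupp.notMem_support_iff.mp hj, hb] at hk
    have hβk : β k = 0 := by omega
    have h := mul_X_pow_smul_pderiv_mem (ih j (Finsupp.notMem_support_iff.mp hj))
      (hX j k hjk (b + 1)) (by simp [pderiv_monomial, hβk])
    rw [monomial_single_add, mul_comm]
    exact L.mem_of_nsmul_mem b.succ_ne_zero h

theorem smul_pderiv_mem_of_pderiv_eq_zero (hpderiv : ∀ k : σ, pderiv k ∈ L)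
    (hX : ∀ j k : σ, j ≠ k → ∀ a : ℕ, (X j ^ a : MvPolynomial σ R) • pderiv k ∈ L)
    {f : MvPolynomial σ R} {k : σ} (hf : pderiv k f = 0) :
    f • pderiv k ∈ L := by
  rw [f.as_sum, Finset.sum_smul]
  refine sum_mem fun α hα => ?_
  rw [← mul_one (coeff α f), ← smul_eq_mul, ← smul_monomial, smul_assoc]
  exact L.smul_mem _ (monomial_smul_pderiv_mem hpderiv hX α k
    (apply_eq_zero_of_mem_support_of_pderiv_eq_zero hf hα))

end Field

theorem rel_of_ne_of_rel_succ {n : ℕ} {r : Fin n → Fin n → Prop}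
    (hsucc : ∀ i j : Fin n, (i : ℕ) + 1 = j → r i j ∧ r j i)
    (htrans : ∀ i j k : Fin n, r i j → r j k → i ≠ k → r i k) {i j : Fin n}
    (hij : i ≠ j) : r i j := by
  suffices h : ∀ d : ℕ, ∀ i j : Fin n, (i : ℕ) + d + 1 = j → r i j ∧ r j i by
    rcases Fin.lt_or_lt_of_ne hij with h' | h'
    · exact (h (j - i - 1) i j (by omega)).1
    · exact (h (i - j - 1) j i (by omega)).2
  intro d
  induction d with
  | zero => exact fun i j h => hsucc i j h
  | succ d ih =>
    intro i j h
    let l : Fin n := ⟨i + d + 1, by omega⟩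
    obtain ⟨hil, hli⟩ := ih i l rfl
    obtain ⟨hlj, hjl⟩ := hsucc l j (by simp only [l]; omega)
    exact ⟨htrans _ _ _ hil hlj (Fin.ne_of_val_ne (by omega)),
      htrans _ _ _ hjl hli (Fin.ne_of_val_ne (by omega))⟩

section Generators

variable {n : ℕ}
  {L : LieSubalgebra ℂ (Derivation ℂ (MvPolynomial (Fin n) ℂ) (MvPolynomial (Fin n) ℂ))}

theorem der_eq_smul_pderiv (f : MvPolynomial (Fin n) ℂ) (k : Fin n) :
    der n f k = f • pderiv k := by
  refine derivation_ext fun i => ?_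
  simp [der, mkDerivation_X, pderiv_X, Pi.single_apply]

theorem U_eq_pderiv {i : Fin n} (hi : (i : ℕ) = n - 1) : U n = pderiv i := by
  refine derivation_ext fun l => ?_
  simp [U, mkDerivation_X, pderiv_X, Pi.single_apply, ← hi, Fin.val_inj]

theorem prod_mul_X_pow_smul_pderiv_mem_of_V'_mem (hV' : V' n ∈ L) {j k : Fin n}
    (hjk : (j : ℕ) = k + 1) (hj : pderiv (R := ℂ) j ∈ L) {e : ℕ} (he : e ≤ 2) :
    ((∏ l ∈ Finset.univ.filter (fun l : Fin n => (j : ℕ) < l), X l ^ 2) * X j ^ e :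
      MvPolynomial (Fin n) ℂ) • pderiv k ∈ L := by
  rw [V'] at hV'
  have h := mul_X_pow_smul_pderiv_mem_of_mkDerivation_mem (k := k) (N := 5) (m := 5 - e) hV' hj
    (pderiv_prod_X_pow_of_notMem (s := Finset.univ.filter fun l : Fin n => (j : ℕ) < l)
      (fun _ => 2) (by simp)) ?_ ?_ (by omega)
  · rwa [Nat.sub_sub_self (by omega)] at h
  · simp [← hjk]
  · intro i hik
    split_ifs with hi
    · exact iterate_pderiv_prod_X_pow_mul_X_pow _
        (Fin.ne_of_val_ne (by simpa [hjk] using Fin.val_ne_of_ne hik)) (by omega)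
    · simpa using iterate_pderiv_mul_X_pow_of_lt (pderiv_one (i := j)) (N := 0) (m := 5 - e)
        (by omega)

theorem prod_mul_X_pow_smul_pderiv_mem_of_V''_mem (hV'' : V'' n ∈ L) {j k : Fin n}
    (hjk : (j : ℕ) + 1 = k) (hj : pderiv (R := ℂ) j ∈ L) {e : ℕ} (he : e ≤ 2) :
    ((∏ l ∈ Finset.univ.filter (fun l : Fin n => (l : ℕ) < j), X l ^ 2) * X j ^ e :
      MvPolynomial (Fin n) ℂ) • pderiv k ∈ L := by
  rw [V''] at hV''
  have h := mul_X_pow_smul_pderiv_mem_of_mkDerivation_mem (k := k) (N := 5) (m := 5 - e) hV'' hj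
    (pderiv_prod_X_pow_of_notMem (s := Finset.univ.filter fun l : Fin n => (l : ℕ) < j)
      (fun _ => 2) (by simp)) ?_ ?_ (by omega)
  · rwa [Nat.sub_sub_self (by omega)] at h
  · simp [← hjk]
  · intro i hik
    split_ifs with hi
    · exact iterate_pderiv_prod_X_pow_mul_X_pow _
        (Fin.ne_of_val_ne (show (i : ℕ) - 1 ≠ j by have := Fin.val_ne_of_ne hik; omega))
        (by omega)
    · simpa using iterate_pderiv_mul_X_pow_of_lt (pderiv_one (i := j)) (N := 0) (m := 5 - e)
        (by omega)

theorem pderiv_mem_of_U_mem_of_V'_mem (hU : U n ∈ L) (hV' : V' n ∈ L) (k : Fin n) :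
    pderiv k ∈ L := by
  induction k using WellFoundedGT.induction with
  | _ k ih =>
  by_cases hk : (k : ℕ) + 1 < n
  · let j : Fin n := ⟨k + 1, hk⟩
    have h := prod_mul_X_pow_smul_pderiv_mem_of_V'_mem hV' (j := j) rfl
      (ih j (Fin.lt_def.mpr k.val.lt_succ_self)) (e := 0) (Nat.zero_le 2)
    have h' := smul_pderiv_mem_of_prod_X_pow_mul _ (fun l hl => ?_) h
    · rwa [pow_zero, one_smul] at h'
    · have hjl : (k : ℕ) + 1 < l := (Finset.mem_filter.mp hl).2
      exact ⟨ih l (Fin.lt_def.mpr (by omega)), by simp⟩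
  · rw [← U_eq_pderiv (i := k) (by omega)]
    exact hU

theorem X_pow_smul_pderiv_mem_of_val_add_one_eq (hV' : V' n ∈ L) (hV'' : V'' n ∈ L)
    (hpderiv : ∀ k : Fin n, pderiv k ∈ L) {i j : Fin n} (hij : (i : ℕ) + 1 = j) {e : ℕ}
    (he : e ≤ 2) :
    (X j ^ e : MvPolynomial (Fin n) ℂ) • pderiv i ∈ L ∧
      (X i ^ e : MvPolynomial (Fin n) ℂ) • pderiv j ∈ L := by
  constructor
  · refine smul_pderiv_mem_of_prod_X_pow_mul _ (fun l hl => ⟨hpderiv l, ?_⟩)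
      (prod_mul_X_pow_smul_pderiv_mem_of_V'_mem hV' hij.symm (hpderiv j) he)
    have hjl : (j : ℕ) < l := (Finset.mem_filter.mp hl).2
    simp [pderiv_X_of_ne (Fin.ne_of_val_ne hjl.ne)]
  · refine smul_pderiv_mem_of_prod_X_pow_mul _ (fun l hl => ⟨hpderiv l, ?_⟩)
      (prod_mul_X_pow_smul_pderiv_mem_of_V''_mem hV'' hij (hpderiv i) he)
    have hli : (l : ℕ) < i := (Finset.mem_filter.mp hl).2
    simp [pderiv_X_of_ne (Fin.ne_of_val_ne hli.ne')]

theorem X_pow_smul_pderiv_mem (hV' : V' n ∈ L) (hV'' : V'' n ∈ L)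
    (hpderiv : ∀ k : Fin n, pderiv k ∈ L) {i j : Fin n} (hij : i ≠ j) (a : ℕ) :
    (X i ^ a : MvPolynomial (Fin n) ℂ) • pderiv j ∈ L := by
  refine rel_of_ne_of_rel_succ
    (r := fun i j => ∀ a : ℕ, (X i ^ a : MvPolynomial (Fin n) ℂ) • pderiv j ∈ L)
    (fun i j h => ?_) (fun i l k hil hlk hik a => ?_) hij a
  · have hne : i ≠ j := Fin.ne_of_val_ne (by omega)
    have h1 := X_pow_smul_pderiv_mem_of_val_add_one_eq hV' hV'' hpderiv h (e := 1) one_le_two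
    have h2 := X_pow_smul_pderiv_mem_of_val_add_one_eq hV' hV'' hpderiv h (e := 2) le_rfl
    rw [pow_one, pow_one] at h1
    exact ⟨X_pow_smul_pderiv_mem_of_sq hne (hpderiv j) h2.2 h1.1,
      X_pow_smul_pderiv_mem_of_sq hne.symm (hpderiv i) h2.1 h1.2⟩
  · have h := mul_X_pow_smul_pderiv_mem (b := 0) (hil a) (hlk 1)
      (by simp [pderiv_X_of_ne hik])
    simpa using h

end Generators

theorem shear_mem_lieSpan_UV'V''_general (n : ℕ) (k : Fin n)
    (f : MvPolynomial (Fin n) ℂ) (hf : MvPolynomial.pderiv k f = 0) :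
    der n f k ∈
      LieSubalgebra.lieSpan ℂ (Derivation ℂ (MvPolynomial (Fin n) ℂ) (MvPolynomial (Fin n) ℂ))
        {U n, V' n, V'' n} := by
  set L := LieSubalgebra.lieSpan ℂ _ {U n, V' n, V'' n}
  have hU : U n ∈ L := LieSubalgebra.subset_lieSpan (by simp)
  have hV' : V' n ∈ L := LieSubalgebra.subset_lieSpan (by simp)
  have hV'' : V'' n ∈ L := LieSubalgebra.subset_lieSpan (by simp)
  have hpderiv := pderiv_mem_of_U_mem_of_V'_mem hU hV'
  rw [der_eq_smul_pderiv]
  exact smul_pderiv_mem_of_pderiv_eq_zero hpderiv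
    (fun i j hij => X_pow_smul_pderiv_mem hV' hV'' hpderiv hij) hf

/-- For every `n ≥ 2`, every `k`, and every polynomial `f` with `∂f/∂zₖ = 0`, the shear
field `f ∂/∂zₖ` lies in the smallest Lie subalgebra of the derivations of `ℂ[z₁,…,zₙ]`
containing `U`, `V′`, `V″`. -/
theorem shear_mem_lieSpan_UV'V'' (n : ℕ) (hn : 2 ≤ n) (k : Fin n)
    (f : MvPolynomial (Fin n) ℂ) (hf : MvPolynomial.pderiv k f = 0) :
    der n f k ∈
      LieSubalgebra.lieSpan ℂ (Derivation ℂ (MvPolynomial (Fin n) ℂ) (MvPolynomial (Fin n) ℂ))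
        {U n, V' n, V'' n} :=
  shear_mem_lieSpan_UV'V''_general n k f hf
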